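/- Let τ > 0 and τ' > 0 and let t₋₂ < t₋₁ < t₀ < t₁ be real time nodes with steps k₁ = t₁ − t₀, k₀ = t₀ − t₋₁, k₋₁ = t₋₁ − t₋₂ satisfying k₁/k₀ = τ and k₀/k₋₁ = τ'. Then for every real polynomial p of degree at most 3, β₃·(p(t₁) − p(t₀)) − β₂·(p(t₀) − p(t₋₁)) + β₁·(p(t₋₁) − p(t₋₂)) = k₁ · p'(t₁), where p' is the derivative of p; that is, the variable-step BDF2-TF difference operator 𝒜 is exact on cubic polynomials (third-order temporal accuracy). -/

import Mathlib

set_option maxHeartbeats 2000000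


/-- BDF2-TF β-coefficients. -/
noncomputable def beta3 (τ τ' : ℝ) : ℝ :=
  1 + τ / (1 + τ) + τ * τ' / (1 + τ' * (1 + τ))
noncomputable def beta2 (τ τ' : ℝ) : ℝ :=
  τ ^ 2 / (1 + τ) + τ ^ 2 * τ' * (1 + τ' * (2 + τ)) / ((1 + τ') * (1 + τ' * (1 + τ)))
noncomputable def beta1 (τ τ' : ℝ) : ℝ :=
  τ ^ 2 * τ' ^ 3 * (1 + τ) / ((1 + τ') * (1 + τ' * (1 + τ)))

/-- The variable-step BDF2-TF difference operator `𝒜` is exact on cubic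
polynomials (third-order temporal accuracy). -/
theorem bdf2tf_A_exact_on_cubics
    (τ τ' : ℝ) (hτ : 0 < τ) (hτ' : 0 < τ')
    (tm2 tm1 t0 t1 : ℝ) (h1 : tm2 < tm1) (h2 : tm1 < t0) (h3 : t0 < t1)
    (k1 k0 km1 : ℝ) (hk1 : k1 = t1 - t0) (hk0 : k0 = t0 - tm1) (hkm1 : km1 = tm1 - tm2)
    (hr1 : k1 / k0 = τ) (hr2 : k0 / km1 = τ')
    (p : Polynomial ℝ) (hp : p.degree ≤ 3) :
    beta3 τ τ' * (p.eval t1 - p.eval t0) - beta2 τ τ' * (p.eval t0 - p.eval tm1)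
      + beta1 τ τ' * (p.eval tm1 - p.eval tm2) = k1 * p.derivative.eval t1 := by
  have hk0pos : 0 < k0 := by rw [hk0]; linarith
  have hkm1pos : 0 < km1 := by rw [hkm1]; linarith
  have hk1' : k1 = τ * k0 := by
    field_simp at hr1; linarith [hr1]
  have hk0' : k0 = τ' * km1 := by
    field_simp at hr2; linarith [hr2]
  have ht1 : t1 = t0 + τ * k0 := by
    rw [← hk1']; linarith [hk1]
  have htm1 : tm1 = t0 - k0 := by linarith [hk0]
  have htm2 : tm2 = t0 - k0 - k0 / τ' := by
    have : km1 = k0 / τ' := by field_simp [hk0']; linarith [hk0']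
    linarith [hkm1, this]
  have hnd : p.natDegree < 4 := by
    have h3d : p.natDegree ≤ 3 := Polynomial.natDegree_le_iff_degree_le.mpr (by exact_mod_cast hp)
    omega
  have he : ∀ x : ℝ, p.eval x = ∑ i ∈ Finset.range 4, p.coeff i * x ^ i := fun x =>
    Polynomial.eval_eq_sum_range' hnd x
  have hnd' : p.derivative.natDegree < 4 :=
    lt_of_le_of_lt (Polynomial.natDegree_derivative_le p) (by omega)
  have he' : p.derivative.eval t1 = ∑ i ∈ Finset.range 4, p.derivative.coeff i * t1 ^ i :=
    Polynomial.eval_eq_sum_range' hnd' t1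
  have hc4 : p.coeff 4 = 0 := Polynomial.coeff_eq_zero_of_natDegree_lt hnd
  simp only [he, he', Finset.sum_range_succ, Finset.sum_range_zero,
    Polynomial.coeff_derivative, hc4]
  rw [hk1', ht1, htm1, htm2]
  have h1τ : (1:ℝ) + τ ≠ 0 := by positivity
  have h1τ' : (1:ℝ) + τ' ≠ 0 := by positivity
  have h1ττ' : (1:ℝ) + τ' * (1 + τ) ≠ 0 := by positivity
  unfold beta3 beta2 beta1
  field_simp
  ring
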